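/- Let R be an irreducible real von Neumann algebra on a real Hilbert space H whose commutant is of real-quaternionic type, with anticommuting complex structures J, K ∈ R'. Then for A, B ∈ R, A + JB = 0 implies A = B = 0, and R + JR := {A + JB : A, B ∈ R} equals B(H_J), the algebra of all bounded complex-linear operators on the internal complexification H_J. -/
import Mathlib


variable {H : Type*}

/-- The commutant of a set of bounded operators. -/
def commutantS [NormedAddCommGroup H] [InnerProductSpace ℝ H]
    (S : Set (H →L[ℝ] H)) : Set (H →L[ℝ] H) :=
  {T | ∀ A ∈ S, T * A = A * T}

/-- A complex structure: a bounded operator `J` with `J* = −J` and `J² = −I`. -/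
def IsComplexStructure [NormedAddCommGroup H] [InnerProductSpace ℝ H] [CompleteSpace H]
    (J : H →L[ℝ] H) : Prop :=
  ContinuousLinearMap.adjoint J = -J ∧ J * J = -1

/-- A subalgebra of `B(H)` is irreducible: the only closed invariant subspaces are `{0}`
and `H`. -/
def IsIrreducibleAlg [NormedAddCommGroup H] [InnerProductSpace ℝ H] [CompleteSpace H]
    (R : StarSubalgebra ℝ (H →L[ℝ] H)) : Prop :=
  ∀ K : Submodule ℝ H, IsClosed (K : Set H) → (∀ T ∈ R, ∀ x ∈ K, T x ∈ K) →
    K = ⊥ ∨ K = ⊤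

set_option maxHeartbeats 1000000 in
set_option synthInstance.maxHeartbeats 1000000 in
/-- Let `R` be an irreducible real von Neumann algebra on a real Hilbert space `H` whose
commutant is of real-quaternionic type, with anticommuting complex structures
`J, K ∈ R'`.  Then for `A, B ∈ R`, `A + JB = 0` implies `A = B = 0`, and
`R + JR = B(H_J)`, the algebra of all bounded complex-linear operators on the internal
complexification `H_J`, i.e. the bounded real-linear operators commuting with `J`. -/
theorem quaternionic_commutant_JR [NormedAddCommGroup H] [InnerProductSpace ℝ H]
    [CompleteSpace H] (R : StarSubalgebra ℝ (H →L[ℝ] H))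
    (hvN : commutantS (commutantS (R : Set (H →L[ℝ] H))) = (R : Set (H →L[ℝ] H)))
    (hirr : IsIrreducibleAlg R)
    (J K : H →L[ℝ] H) (hJ : IsComplexStructure J) (hK : IsComplexStructure K)
    (hanti : J * K = -(K * J))
    (hquat : commutantS (R : Set (H →L[ℝ] H)) =
      {T | ∃ a b c d : ℝ, T = a • (1 : H →L[ℝ] H) + b • (J * K) + c • J + d • K}) :
    (∀ A B : H →L[ℝ] H, A ∈ R → B ∈ R → A + J * B = 0 → A = 0 ∧ B = 0) ∧
    {T : H →L[ℝ] H | ∃ A B : H →L[ℝ] H, A ∈ R ∧ B ∈ R ∧ T = A + J * B} =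
      {T : H →L[ℝ] H | T * J = J * T} := by
  obtain ⟨-, hJ2⟩ := hJ
  obtain ⟨-, hK2⟩ := hK
  have hJmem : J ∈ commutantS (R : Set (H →L[ℝ] H)) := by
    rw [hquat]; exact ⟨0, 0, 1, 0, by simp⟩
  have hKmem : K ∈ commutantS (R : Set (H →L[ℝ] H)) := by
    rw [hquat]; exact ⟨0, 0, 0, 1, by simp⟩
  have hJR : ∀ A ∈ R, J * A = A * J := fun A hA => hJmem A hA
  have hKR : ∀ A ∈ R, K * A = A * K := fun A hA => hKmem A hA
  have hanti' : K * J = -(J * K) := by rw [hanti, neg_neg]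
  have hJ2' : ∀ X : H →L[ℝ] H, J * (J * X) = -X := fun X => by
    rw [← mul_assoc, hJ2, neg_one_mul]
  have hK2' : ∀ X : H →L[ℝ] H, K * (K * X) = -X := fun X => by
    rw [← mul_assoc, hK2, neg_one_mul]
  have hanti2 : ∀ X : H →L[ℝ] H, K * (J * X) = -(J * (K * X)) := fun X => by
    rw [← mul_assoc, hanti', neg_mul, mul_assoc]
  have memR : ∀ X : H →L[ℝ] H, X * J = J * X → X * K = K * X → X ∈ R := by
    intro X hXJ hXK
    have hJK : X * (J * K) = (J * K) * X := by
      rw [← mul_assoc, hXJ, mul_assoc, hXK, ← mul_assoc]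
    have hmem : X ∈ commutantS (commutantS (R : Set (H →L[ℝ] H))) := by
      intro A hA
      rw [hquat] at hA
      obtain ⟨a, b, c, d, rfl⟩ := hA
      simp only [mul_add, add_mul, mul_smul_comm, smul_mul_assoc, mul_one, one_mul,
        hXJ, hXK, hJK]
    rw [hvN] at hmem
    exact hmem
  constructor
  · intro A B hA hB h
    have hAK := hKR A hA
    have hBK := hKR B hB
    have hA' : A = -(J * B) := eq_neg_of_add_eq_zero_left h
    have h1 : A * K = K * (J * B) := by
      rw [hA', neg_mul, mul_assoc, ← hBK, ← mul_assoc, hanti, neg_mul, neg_neg, mul_assoc]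
    have h2 : A * K = -(A * K) := by
      nth_rewrite 1 [h1]
      rw [show J * B = -A from by rw [hA', neg_neg], mul_neg, hAK]
    have hAK0 : A * K = 0 := by
      have h3 : (2 : ℝ) • (A * K) = 0 := by
        rw [two_smul]
        nth_rewrite 2 [h2]
        rw [add_neg_cancel]
      have := smul_eq_zero.mp h3
      simpa using this
    have hA0 : A = 0 := by
      have h4 : A * (K * K) = 0 := by rw [← mul_assoc, hAK0, zero_mul]
      rwa [hK2, mul_neg_one, neg_eq_zero] at h4
    have hJB : J * B = 0 := by rw [hA0, zero_add] at h; exact h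
    have hB0 : B = 0 := by
      have h5 : J * (J * B) = 0 := by rw [hJB, mul_zero]
      rwa [hJ2', neg_eq_zero] at h5
    exact ⟨hA0, hB0⟩
  · ext T
    simp only [Set.mem_setOf_eq]
    constructor
    · rintro ⟨A, B, hA, hB, rfl⟩
      have hAJ := hJR A hA
      have hBJ := hJR B hB
      rw [add_mul, mul_add, mul_assoc, ← hBJ, ← hAJ, ← mul_assoc]
    · intro hTJ
      have hTJ' : ∀ X : H →L[ℝ] H, T * (J * X) = J * (T * X) := fun X => by
        rw [← mul_assoc, hTJ, mul_assoc]
      set A := (2⁻¹ : ℝ) • (T - K * T * K) with hAdef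
      set D := (2⁻¹ : ℝ) • (T + K * T * K) with hDdef
      set B := -(J * D) with hBdef
      have hAD : A + D = T := by
        rw [hAdef, hDdef, ← smul_add]
        have key : T - K * T * K + (T + K * T * K) = T + T := by abel
        rw [key, ← two_smul ℝ, smul_smul]
        norm_num
      have hAJ : A * J = J * A := by
        rw [hAdef]
        simp only [smul_mul_assoc, mul_smul_comm, sub_mul, mul_sub, add_mul, mul_add,
          mul_assoc, neg_mul, mul_neg, neg_neg, hJ2', hK2', hJ2, hK2, hanti2, hanti',
          hTJ', hTJ, mul_neg_one, neg_one_mul, mul_one, one_mul, smul_neg, neg_smul]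
      have hAK : A * K = K * A := by
        rw [hAdef]
        simp only [smul_mul_assoc, mul_smul_comm, sub_mul, mul_sub, add_mul, mul_add,
          mul_assoc, neg_mul, mul_neg, neg_neg, hJ2', hK2', hJ2, hK2, hanti2, hanti',
          hTJ', hTJ, mul_neg_one, neg_one_mul, mul_one, one_mul, smul_neg, neg_smul]
        abel
      have hDJ : D * J = J * D := by
        rw [hDdef]
        simp only [smul_mul_assoc, mul_smul_comm, sub_mul, mul_sub, add_mul, mul_add,
          mul_assoc, neg_mul, mul_neg, neg_neg, hJ2', hK2', hJ2, hK2, hanti2, hanti',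
          hTJ', hTJ, mul_neg_one, neg_one_mul, mul_one, one_mul, smul_neg, neg_smul]
      have hBJ : B * J = J * B := by
        rw [hBdef, neg_mul, mul_assoc, hDJ, ← mul_assoc, mul_neg, mul_assoc]
      have hBK : B * K = K * B := by
        rw [hBdef]
        simp only [smul_mul_assoc, mul_smul_comm, sub_mul, mul_sub, add_mul, mul_add,
          mul_assoc, neg_mul, mul_neg, neg_neg, hJ2', hK2', hJ2, hK2, hanti2, hanti',
          hTJ', hTJ, mul_neg_one, neg_one_mul, mul_one, one_mul, smul_neg, neg_smul, hDdef]
        abel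
      have hJB : J * B = D := by
        rw [hBdef, mul_neg, hJ2', neg_neg]
      exact ⟨A, B, memR A hAJ hAK, memR B hBJ hBK, by rw [hJB]; exact hAD.symm⟩
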